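/- arXiv:2002.00864 — 4 statements merged into one kernel-verified Lean document; each statement's English description precedes it below -/
import Mathlib

section
/- For 0 < γ < ξ < 1, with θ₁ = (1-γ)/(ξ-γ) and θ₂ = (1-γ)(γ² + ξ - 2γξ)/(ξ-γ)³, one has 0 < 1 - θ₁²/θ₂ < 1; in particular θ₁² < θ₂. -/
theorem rate_in_unit_interval (γ ξ θ₁ θ₂ : ℝ) (hγ : 0 < γ) (hγξ : γ < ξ) (hξ : ξ < 1)
    (hθ₁ : θ₁ = (1 - γ) / (ξ - γ))
    (hθ₂ : θ₂ = (1 - γ) * (γ ^ 2 + ξ - 2 * γ * ξ) / (ξ - γ) ^ 3) :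
    0 < 1 - θ₁ ^ 2 / θ₂ ∧ 1 - θ₁ ^ 2 / θ₂ < 1 ∧ θ₁ ^ 2 < θ₂ := by
  have ha : 0 < ξ - γ := by linarith
  have hb : 0 < 1 - γ := by linarith
  have hc : 0 < γ ^ 2 + ξ - 2 * γ * ξ := by nlinarith
  have hθ₂pos : 0 < θ₂ := by
    rw [hθ₂]; exact div_pos (mul_pos hb hc) (pow_pos ha 3)
  have hr : θ₁ ^ 2 / θ₂ = (1 - γ) * (ξ - γ) / (γ ^ 2 + ξ - 2 * γ * ξ) := by
    rw [hθ₁, hθ₂]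
    field_simp
  have h1 : θ₁ ^ 2 / θ₂ < 1 := by
    rw [hr, div_lt_one hc]; nlinarith
  have h0 : 0 < θ₁ ^ 2 / θ₂ := by
    rw [hr]; exact div_pos (mul_pos hb ha) hc
  refine ⟨by linarith, by linarith, ?_⟩
  exact (div_lt_one hθ₂pos).mp h1
end

section
/- For 0 < γ < ξ < 1, the function m_C(z) = (z + γ + ξ - 2 - √((γ+ξ-2+z)² + 4(z-1)(1-γ)(1-ξ)))/(2z(1-z)) satisfies the fixed point equation η(z) = (1-γ) + γ/(1 + z(1 + (ξ-1)/η(z))) where η(z) = (1/z)·m_C(-1/z), for all real z > 0 (where all quantities are well-defined and η(z) > 0). -/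
theorem eta_fixed_point (γ ξ z : ℝ) (hγ : 0 < γ) (hγξ : γ < ξ) (hξ : ξ < 1) (hz : 0 < z)
    (mC : ℝ → ℝ)
    (hmC : ∀ w, mC w = (w + γ + ξ - 2 -
        Real.sqrt ((γ + ξ - 2 + w) ^ 2 + 4 * (w - 1) * (1 - γ) * (1 - ξ)))
        / (2 * w * (1 - w)))
    (η : ℝ) (hη : η = (1 / z) * mC (-1 / z)) (hηpos : 0 < η)
    (hden : 1 + z * (1 + (ξ - 1) / η) ≠ 0) :
    η = (1 - γ) + γ / (1 + z * (1 + (ξ - 1) / η)) := by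
  have hz' : z ≠ 0 := hz.ne'
  have hz1 : z + 1 ≠ 0 := by positivity
  have hη0 : η ≠ 0 := hηpos.ne'
  set S : ℝ := (γ + ξ - 2 + (-1 / z)) ^ 2 + 4 * ((-1 / z) - 1) * (1 - γ) * (1 - ξ) with hSdef
  have hz2S : z ^ 2 * S = (z * (ξ - γ)) ^ 2 + 2 * z * (γ * (1 - ξ) + ξ * (1 - γ)) + 1 := by
    rw [hSdef]; field_simp; ring
  have hSpos : 0 ≤ S := by
    have h1 : 0 < z ^ 2 * S := by
      rw [hz2S]
      have : 0 ≤ (z * (ξ - γ)) ^ 2 := sq_nonneg _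
      nlinarith [mul_pos hγ (sub_pos.mpr hξ), mul_pos (lt_trans hγ hγξ) (sub_pos.mpr (lt_trans hγξ hξ)), hz]
    nlinarith [sq_nonneg z]
  set s : ℝ := Real.sqrt S with hsdef
  have hs2 : s ^ 2 = S := Real.sq_sqrt hSpos
  -- solve for s from the definition of η
  have hzs : z * s = z * (γ + ξ - 2) - 1 + 2 * (z + 1) * η := by
    have h := hη
    rw [hmC (-1 / z)] at h
    have hw : (-1 / z) ≠ 0 := by simp [hz']
    have hw1 : 1 - (-1 / z) ≠ 0 := by
      have : 1 - (-1 / z) = (z + 1) / z := by field_simp; ring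
      rw [this]; exact div_ne_zero hz1 hz'
    rw [← hSdef, ← hsdef] at h
    field_simp at h
    have h' : η * 2 * (z + 1) = -(-1 + z * γ + z * ξ - z * 2 - z * s) := by
      rw [h, show z - -1 = z + 1 by ring, neg_mul, div_mul_cancel₀ _ hz1]
    have h9 : z ^ 2 * (z * s) = z ^ 2 * (z * (γ + ξ - 2) - 1 + 2 * (z + 1) * η) := by
      linear_combination (-z ^ 2) * h'
    exact mul_left_cancel₀ (pow_ne_zero 2 hz') h9
  -- quadratic satisfied by η
  have hQ : (z + 1) * η ^ 2 + (z * (γ + ξ - 2) - 1) * η + z * (1 - γ) * (1 - ξ) = 0 := by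
    have e2 : z ^ 2 * S
        = (z * (γ + ξ - 2) - 1) ^ 2 - 4 * z * (z + 1) * (1 - γ) * (1 - ξ) := by
      rw [hSdef]; field_simp; ring
    have h4 : (z * (γ + ξ - 2) - 1 + 2 * (z + 1) * η) ^ 2
        = (z * (γ + ξ - 2) - 1) ^ 2 - 4 * z * (z + 1) * (1 - γ) * (1 - ξ) := by
      calc (z * (γ + ξ - 2) - 1 + 2 * (z + 1) * η) ^ 2 = (z * s) ^ 2 := by rw [hzs]
        _ = z ^ 2 * S := by rw [mul_pow, hs2]
        _ = _ := e2
    have h5 : 4 * (z + 1) * ((z + 1) * η ^ 2 + (z * (γ + ξ - 2) - 1) * η + z * (1 - γ) * (1 - ξ)) = 0 := by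
      linear_combination h4
    have h6 : (4 : ℝ) * (z + 1) ≠ 0 := by positivity
    exact (mul_eq_zero.mp h5).resolve_left h6
  -- conclude
  rw [eq_comm, ← sub_eq_zero]
  have hη' : η + z * (η + (ξ - 1)) ≠ 0 := by
    intro hc
    apply hden
    have : 1 + z * (1 + (ξ - 1) / η) = (η + z * (η + (ξ - 1))) / η := by field_simp
    rw [this, hc, zero_div]
  field_simp
  linear_combination -hQ
end

section
/- For 0 < γ < ξ < 1, the limit as z → 0 of (d/dz) m_C(z) - (1-γ)/z², where m_C(z) = (z + γ + ξ - 2 - √((γ+ξ-2+z)² + 4(z-1)(1-γ)(1-ξ)))/(2z(1-z)), equals γ(1-γ)(γ² + ξ - 2γξ)/(ξ-γ)³. -/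
open Filter Topology

theorem second_moment_limit (γ ξ : ℝ) (hγ : 0 < γ) (hγξ : γ < ξ) (hξ : ξ < 1)
    (mC : ℝ → ℝ)
    (hmC : ∀ z, mC z = (z + γ + ξ - 2 -
        Real.sqrt ((γ + ξ - 2 + z) ^ 2 + 4 * (z - 1) * (1 - γ) * (1 - ξ)))
        / (2 * z * (1 - z))) :
    Tendsto (fun z => deriv mC z - (1 - γ) / z ^ 2) (𝓝[≠] (0 : ℝ))
      (𝓝 (γ * (1 - γ) * (γ ^ 2 + ξ - 2 * γ * ξ) / (ξ - γ) ^ 3)) := by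
  have hxg : (0:ℝ) < ξ - γ := by linarith
  have hxg' : ξ - γ ≠ 0 := ne_of_gt hxg
  have h1x : (0:ℝ) < 1 - ξ := by linarith
  have h1x' : (1:ℝ) - ξ ≠ 0 := ne_of_gt h1x
  set g : ℝ → ℝ := fun z => (γ + ξ - 2 + z) ^ 2 + 4 * (z - 1) * (1 - γ) * (1 - ξ) with hg_def
  set s : ℝ → ℝ := fun z => Real.sqrt (g z) with hs_def
  set gd : ℝ → ℝ := fun z => 2 * (γ + ξ - 2 + z) + 4 * (1 - γ) * (1 - ξ) with hgd_def
  set sd : ℝ → ℝ := fun z => gd z / (2 * s z) with hsd_def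
  set Q : ℝ → ℝ := fun z => (z + γ + ξ - 2 + s z) * (s z - z - γ + ξ) with hQ_def
  set Qd : ℝ → ℝ := fun z =>
    (1 + sd z) * (s z - z - γ + ξ) + (z + γ + ξ - 2 + s z) * (sd z - 1) with hQd_def
  set c : ℝ := -4 * γ * (1 - γ) * (1 - ξ) with hc_def
  set D : ℝ → ℝ := fun z => (0 * Q z - c * Qd z) / (Q z) ^ 2 with hD_def
  have hgc : Continuous g := by
    rw [hg_def]; continuity
  have hsc : Continuous s := by
    rw [hs_def]; exact Real.continuous_sqrt.comp hgc
  have hg0 : g 0 = (ξ - γ) ^ 2 := by simp only [hg_def]; ring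
  have hs0 : s 0 = ξ - γ := by
    simp only [hs_def]; rw [hg0]; exact Real.sqrt_sq hxg.le
  -- the good open set
  set U : Set ℝ := {z | 0 < g z} ∩ {z | z + γ + ξ - 2 + s z < 0} ∩
      ({z | 0 < s z - z - γ + ξ} ∩ {z | z < 1}) with hU_def
  have hUopen : IsOpen U := by
    apply IsOpen.inter; apply IsOpen.inter
    · exact isOpen_lt continuous_const hgc
    · exact isOpen_lt
        ((((continuous_id.add continuous_const).add continuous_const).sub
          continuous_const).add hsc) continuous_const
    · exact (isOpen_lt continuous_const
        (((hsc.sub continuous_id).sub continuous_const).add continuous_const)).inter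
        (isOpen_lt continuous_id continuous_const)
  have h0U : (0:ℝ) ∈ U := by
    refine ⟨⟨?_, ?_⟩, ?_, ?_⟩
    · show 0 < g 0
      rw [hg0]; positivity
    · show (0:ℝ) + γ + ξ - 2 + s 0 < 0
      rw [hs0]; linarith
    · show 0 < s 0 - 0 - γ + ξ
      rw [hs0]; linarith
    · show (0:ℝ) < 1; norm_num
  -- derivative of H = c / Q on U
  have hHderiv : ∀ z ∈ U, HasDerivAt (fun w => c / Q w) (D z) z := by
    rintro z ⟨⟨hgz, hAz⟩, hBz, hz1⟩
    simp only [Set.mem_setOf_eq] at hgz hAz hBz hz1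
    have hgz' : g z ≠ 0 := ne_of_gt hgz
    have hszpos : 0 < s z := by rw [hs_def]; exact Real.sqrt_pos.mpr hgz
    have hgd' : HasDerivAt g (gd z) z := by
      have h1 : HasDerivAt (fun w : ℝ => γ + ξ - 2 + w) 1 z := (hasDerivAt_id z).const_add _
      have h2 := h1.pow 2
      have h3 : HasDerivAt (fun w : ℝ => 4 * (w - 1) * (1 - γ) * (1 - ξ))
          (4 * (1 - γ) * (1 - ξ)) z := by
        have h4 := ((((hasDerivAt_id z).sub_const 1).const_mul 4).mul_const (1 - γ)).mul_const (1 - ξ)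
        exact h4.congr_deriv (by ring)
      rw [hg_def, hgd_def]
      exact (h2.add h3).congr_deriv (by push_cast; ring)
    have hsd' : HasDerivAt s (sd z) z := by
      have h := (Real.hasDerivAt_sqrt hgz').comp z hgd'
      rw [hs_def]
      exact h.congr_deriv (by simp only [hsd_def, hs_def]; ring)
    have hQd' : HasDerivAt Q (Qd z) z := by
      have hA : HasDerivAt (fun w : ℝ => w + γ + ξ - 2 + s w) (1 + sd z) z :=
        ((((hasDerivAt_id z).add_const γ).add_const ξ).sub_const 2).add hsd'
      have hB : HasDerivAt (fun w : ℝ => s w - w - γ + ξ) (sd z - 1) z :=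
        (((hsd'.sub (hasDerivAt_id z)).sub_const γ).add_const ξ)
      rw [hQ_def, hQd_def]
      exact hA.mul hB
    have hQz : Q z ≠ 0 := by
      rw [hQ_def]
      exact mul_ne_zero (ne_of_lt hAz) (ne_of_gt hBz)
    have := (hasDerivAt_const z c).div hQd' hQz
    rw [hD_def]
    exact this
  -- the identity on U \ {0}
  have hident : ∀ z ∈ U, z ≠ 0 → mC z = c / Q z - (1 - γ) / z := by
    rintro z ⟨⟨hgz, hAz⟩, hBz, hz1⟩ hz0
    simp only [Set.mem_setOf_eq] at hgz hAz hBz hz1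
    have hs2 : s z ^ 2 = g z := by
      rw [hs_def]; exact Real.sq_sqrt (le_of_lt hgz)
    have hQz : Q z ≠ 0 := by
      rw [hQ_def]; exact mul_ne_zero (ne_of_lt hAz) (ne_of_gt hBz)
    have h1z : (1:ℝ) - z ≠ 0 := ne_of_gt (by linarith)
    have h2z : 2 * z * (1 - z) ≠ 0 := by
      exact mul_ne_zero (mul_ne_zero two_ne_zero hz0) h1z
    have hsz : Real.sqrt ((γ + ξ - 2 + z) ^ 2 + 4 * (z - 1) * (1 - γ) * (1 - ξ)) = s z := rfl
    rw [hmC z, hsz, div_sub_div _ _ hQz hz0, div_eq_div_iff h2z (mul_ne_zero hQz hz0)]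
    simp only [hg_def] at hs2
    simp only [hQ_def, hc_def]
    linear_combination (2 * z - z * ξ - z * γ - z * s z - z ^ 2 + 2 * z ^ 2 * γ) * hs2
  -- deriv mC z - (1-γ)/z^2 = D z on U \ {0}
  have hderiv : ∀ z ∈ U, z ≠ 0 → deriv mC z - (1 - γ) / z ^ 2 = D z := by
    intro z hzU hz0
    have hVopen : IsOpen (U ∩ {w : ℝ | w ≠ 0}) := hUopen.inter isOpen_ne
    have hzV : z ∈ U ∩ {w : ℝ | w ≠ 0} := ⟨hzU, hz0⟩
    have heq : mC =ᶠ[𝓝 z] fun w => c / Q w - (1 - γ) / w :=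
      Filter.eventuallyEq_of_mem (hVopen.mem_nhds hzV) (fun w hw => hident w hw.1 hw.2)
    have hF : HasDerivAt (fun w => c / Q w - (1 - γ) / w)
        (D z - (0 * z - (1 - γ) * 1) / z ^ 2) z :=
      (hHderiv z hzU).sub (((hasDerivAt_const z (1 - γ)).div (hasDerivAt_id z) hz0))
    rw [heq.deriv_eq, hF.deriv]
    ring
  -- continuity of D at 0
  have hQ0 : Q 0 = -4 * (1 - ξ) * (ξ - γ) := by
    simp only [hQ_def, hs0]; ring
  have hQ0' : Q 0 ≠ 0 := by
    rw [hQ0]; intro h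
    have := mul_ne_zero (mul_ne_zero (by norm_num : (-4:ℝ) ≠ 0) h1x') hxg'
    exact this h
  have hcontD : ContinuousAt D 0 := by
    have hcs : ContinuousAt s 0 := hsc.continuousAt
    have hcgd : ContinuousAt gd 0 := by rw [hgd_def]; fun_prop
    have hs0ne : 2 * s 0 ≠ 0 := by rw [hs0]; positivity
    have hcsd : ContinuousAt sd 0 := by
      rw [hsd_def]
      exact hcgd.div (continuousAt_const.mul hcs) hs0ne
    have hcQ : ContinuousAt Q 0 := by
      rw [hQ_def]
      exact ((((continuousAt_id.add continuousAt_const).add continuousAt_const).sub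
        continuousAt_const).add hcs).mul
        (((hcs.sub continuousAt_id).sub continuousAt_const).add continuousAt_const)
    have hcQd : ContinuousAt Qd 0 := by
      rw [hQd_def]
      exact ((continuousAt_const.add hcsd).mul
        (((hcs.sub continuousAt_id).sub continuousAt_const).add continuousAt_const)).add
        (((((continuousAt_id.add continuousAt_const).add continuousAt_const).sub
          continuousAt_const).add hcs).mul (hcsd.sub continuousAt_const))
    rw [hD_def]
    exact ((continuousAt_const.mul hcQ).sub (continuousAt_const.mul hcQd)).div
      (hcQ.pow 2) (pow_ne_zero 2 hQ0')
  -- value D 0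
  have hsd0 : sd 0 = -(γ + ξ - 2 * γ * ξ) / (ξ - γ) := by
    simp only [hsd_def, hgd_def, hs0]
    rw [div_eq_div_iff (by positivity) hxg']
    ring
  have hQd0 : Qd 0 = 4 * (1 - ξ) * (γ ^ 2 + ξ - 2 * γ * ξ) / (ξ - γ) := by
    simp only [hQd_def, hsd0, hs0]
    field_simp
    ring
  have hD0 : D 0 = γ * (1 - γ) * (γ ^ 2 + ξ - 2 * γ * ξ) / (ξ - γ) ^ 3 := by
    simp only [hD_def, hQ0, hQd0, hc_def]
    field_simp
    ring
  -- conclude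
  have htend : Tendsto D (𝓝[≠] (0:ℝ)) (𝓝 (γ * (1 - γ) * (γ ^ 2 + ξ - 2 * γ * ξ) / (ξ - γ) ^ 3)) := by
    rw [← hD0]
    exact (hcontD.tendsto).mono_left nhdsWithin_le_nhds
  refine htend.congr' ?_
  filter_upwards [mem_nhdsWithin_of_mem_nhds (hUopen.mem_nhds h0U), self_mem_nhdsWithin]
    with z hzU hz0
  exact (hderiv z hzU hz0).symm
end

section
/- Let A ∈ ℝ^{n×d} have rank d with thin SVD A = UΣV^T, let x* minimize ‖Ax - b‖², and let x_{t+1} = x_t - μ_t (A^T S_t^T S_t A)^{-1} A^T(Ax_t - b) with A^T S_t^T S_t A invertible. Then the error Δ_t := U^T A(x_t - x*) satisfies Δ_{t+1} = (I_d - μ_t (U^T S_t^T S_t U)^{-1}) Δ_t. -/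
open Matrix

theorem ihs_error_recursion (n d m : ℕ)
    (A : Matrix (Fin n) (Fin d) ℝ) (U : Matrix (Fin n) (Fin d) ℝ)
    (Sig V : Matrix (Fin d) (Fin d) ℝ)
    (hA : A = U * Sig * Vᵀ) (hU : Uᵀ * U = 1)
    (hSigdiag : Sig.IsDiag) (hSigunit : IsUnit Sig)
    (hV₁ : Vᵀ * V = 1) (hV₂ : V * Vᵀ = 1)
    (b : Fin n → ℝ) (xstar : Fin d → ℝ)
    (hstar : ∀ y : Fin d → ℝ,
      ∑ i, (A.mulVec xstar - b) i ^ 2 ≤ ∑ i, (A.mulVec y - b) i ^ 2)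
    (S : ℕ → Matrix (Fin m) (Fin n) ℝ)
    (hinv : ∀ t, IsUnit (Aᵀ * (S t)ᵀ * S t * A))
    (μ : ℕ → ℝ) (x : ℕ → Fin d → ℝ)
    (hrec : ∀ t, x (t + 1) = x t - μ t •
      (Aᵀ * (S t)ᵀ * S t * A)⁻¹.mulVec (Aᵀ.mulVec (A.mulVec (x t) - b)))
    (Δ : ℕ → Fin d → ℝ)
    (hΔ : ∀ t, Δ t = Uᵀ.mulVec (A.mulVec (x t - xstar))) :
    ∀ t, Δ (t + 1) = ((1 : Matrix (Fin d) (Fin d) ℝ)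
      - μ t • (Uᵀ * (S t)ᵀ * S t * U)⁻¹).mulVec (Δ t) := by
  -- normal equations
  have hne : Aᵀ.mulVec (A.mulVec xstar - b) = 0 := by
    funext j
    set r : Fin n → ℝ := A.mulVec xstar - b with hr
    set a : ℝ := ∑ i, A i j * r i with ha
    set c : ℝ := ∑ i, (A i j) ^ 2 with hc
    have hcc : 0 ≤ c := Finset.sum_nonneg fun i _ => sq_nonneg _
    have hq : ∀ s : ℝ, 0 ≤ 2 * a * s + c * s ^ 2 := by
      intro s
      have h1 := hstar (xstar + s • (Pi.single j 1 : Fin d → ℝ))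
      have h2 : A.mulVec (xstar + s • (Pi.single j 1 : Fin d → ℝ)) - b
          = fun i => r i + s * A i j := by
        funext i
        simp [mulVec_add, mulVec_smul, hr, Matrix.mulVec_single, Pi.sub_apply]
        ring
      rw [h2] at h1
      have e1 : ∑ i, 2 * (A i j * r i) * s = 2 * a * s := by
        rw [ha, Finset.mul_sum, Finset.sum_mul]
      have e2 : ∑ i, A i j ^ 2 * s ^ 2 = c * s ^ 2 := by
        rw [hc, Finset.sum_mul]
      have h3 : ∑ i, (r i + s * A i j) ^ 2
          = ∑ i, r i ^ 2 + (2 * a * s + c * s ^ 2) := by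
        rw [← e1, ← e2, ← Finset.sum_add_distrib, ← Finset.sum_add_distrib]
        exact Finset.sum_congr rfl fun i _ => by ring
      rw [h3] at h1
      linarith
    have haz : a = 0 := by
      have h4 := hq (-a / (c + 1))
      have h5 : (0:ℝ) < c + 1 := by linarith
      have h6 : 2 * a * (-a / (c + 1)) + c * (-a / (c + 1)) ^ 2
          = (-(a ^ 2) * (c + 2)) / (c + 1) ^ 2 := by
        field_simp
        ring
      rw [h6] at h4
      have h7 : 0 ≤ -(a ^ 2) * (c + 2) := by
        have h8 : (0:ℝ) < (c + 1) ^ 2 := by positivity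
        calc (0:ℝ) = 0 * (c + 1) ^ 2 := by ring
          _ ≤ (-(a ^ 2) * (c + 2)) / (c + 1) ^ 2 * (c + 1) ^ 2 := by
              apply mul_le_mul_of_nonneg_right h4 (le_of_lt h8)
          _ = -(a ^ 2) * (c + 2) := by field_simp
      have ha2 : a ^ 2 = 0 := by nlinarith [sq_nonneg a]
      exact sq_eq_zero_iff.mp ha2
    show (Aᵀ.mulVec r) j = 0
    rw [← haz, ha]
    simp [mulVec, dotProduct, transpose_apply, mul_comm]
  intro t
  -- abbreviations
  set M : Matrix (Fin d) (Fin d) ℝ := Uᵀ * (S t)ᵀ * S t * U with hM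
  set N : Matrix (Fin d) (Fin d) ℝ := Aᵀ * (S t)ᵀ * S t * A with hN
  have hSigT : Sigᵀ = Sig := by
    ext i j
    by_cases h : i = j
    · subst h; rfl
    · rw [transpose_apply, hSigdiag h, hSigdiag (Ne.symm h)]
  have hNM : N = V * Sig * M * Sig * Vᵀ := by
    rw [hN, hM, hA]
    simp only [transpose_mul, transpose_transpose, hSigT, Matrix.mul_assoc]
  have hSigdet : IsUnit Sig.det := (Matrix.isUnit_iff_isUnit_det _).mp hSigunit
  have hVdet : IsUnit V.det := Matrix.isUnit_det_of_right_inverse hV₂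
  have hNdet : IsUnit N.det := (Matrix.isUnit_iff_isUnit_det _).mp (hinv t)
  have hMdet : IsUnit M.det := by
    rw [hNM] at hNdet
    simp only [Matrix.det_mul, IsUnit.mul_iff] at hNdet
    tauto
  -- cancellation helpers
  have cancV : ∀ (k : ℕ) (X : Matrix (Fin d) (Fin k) ℝ), Vᵀ * (V * X) = X := by
    intro k X; rw [← Matrix.mul_assoc, hV₁, Matrix.one_mul]
  have cancU : ∀ (k : ℕ) (X : Matrix (Fin d) (Fin k) ℝ), Uᵀ * (U * X) = X := by
    intro k X; rw [← Matrix.mul_assoc, hU, Matrix.one_mul]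
  have cancS1 : ∀ (k : ℕ) (X : Matrix (Fin d) (Fin k) ℝ), Sig * (Sig⁻¹ * X) = X := by
    intro k X; rw [← Matrix.mul_assoc, Matrix.mul_nonsing_inv _ hSigdet, Matrix.one_mul]
  have cancS2 : ∀ (k : ℕ) (X : Matrix (Fin d) (Fin k) ℝ), Sig⁻¹ * (Sig * X) = X := by
    intro k X; rw [← Matrix.mul_assoc, Matrix.nonsing_inv_mul _ hSigdet, Matrix.one_mul]
  have cancM1 : ∀ (k : ℕ) (X : Matrix (Fin d) (Fin k) ℝ), M * (M⁻¹ * X) = X := by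
    intro k X; rw [← Matrix.mul_assoc, Matrix.mul_nonsing_inv _ hMdet, Matrix.one_mul]
  -- inverse of N
  have hNinv : N⁻¹ = V * Sig⁻¹ * M⁻¹ * Sig⁻¹ * Vᵀ := by
    apply Matrix.inv_eq_right_inv
    rw [hNM]
    simp only [Matrix.mul_assoc]
    rw [cancV, cancS1, cancM1, cancS1, hV₂]
  -- key matrix identity
  have hkey : Uᵀ * A * N⁻¹ * (Aᵀ * A) = M⁻¹ * (Uᵀ * A) := by
    rw [hNinv, hA]
    simp only [transpose_mul, transpose_transpose, hSigT, Matrix.mul_assoc]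
    simp only [cancU, cancV, cancS1, cancS2]
  -- the recursion
  have hres : Aᵀ.mulVec (A.mulVec (x t) - b) = (Aᵀ * A).mulVec (x t - xstar) := by
    have : A.mulVec (x t) - b = A.mulVec (x t - xstar) + (A.mulVec xstar - b) := by
      rw [mulVec_sub]; abel
    rw [this, mulVec_add, hne, add_zero, mulVec_mulVec]
  rw [hΔ, hΔ, hrec, Matrix.sub_mulVec, Matrix.one_mulVec, Matrix.smul_mulVec]
  have hsub : x t - μ t • N⁻¹.mulVec (Aᵀ.mulVec (A.mulVec (x t) - b)) - xstar
      = (x t - xstar) - μ t • N⁻¹.mulVec ((Aᵀ * A).mulVec (x t - xstar)) := by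
    rw [hres]; abel
  rw [hsub, mulVec_sub, mulVec_smul, mulVec_sub, mulVec_smul]
  congr 1
  simp only [mulVec_mulVec]
  simp only [← Matrix.mul_assoc] at hkey ⊢
  rw [hkey]
end
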